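/- Let f̂ ∈ R̄_β maximize Φ_s over R̄_β with û = u_{f̂}, α > 0, and assume χ_{{û>α}} ≤ f̂ ≤ χ_{{û≥α}} a.e. Let Ẽ be any measurable set with {û > α} ⊂ Ẽ ⊂ {û ≥ α} and |Ẽ| = β, and let v = u_{χ_Ẽ}. Then the bilinear pairing ⟨û, û − v⟩_s = (1/2)∬(û(x)-û(y))((û−v)(x)-(û−v)(y))/|x-y|^{n+2s} dx dy equals 0. -/

import Mathlib

/-!
Testing the weak formulations of `û` and `v` against `û` turns `⟨û, û - v⟩_s` into
`∫_D (f̂ - χ_Ẽ) û`. The sandwich condition and `{û > α} ⊆ Ẽ ⊆ {û ≥ α}` make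
`(f̂ - χ_Ẽ)(û - α)` vanish a.e. on `D`, so the integral equals `α ∫_D (f̂ - χ_Ẽ)`, which is zero
because `f̂` and `χ_Ẽ` both have mass `β`.
-/

open MeasureTheory Set Filter Topology

/-- Squared Gagliardo–Nirenberg seminorm `[u]_s^2`. -/
noncomputable def gagliardoSq (n : ℕ) (s : ℝ) (u : (Fin n → ℝ) → ℝ) : ℝ :=
  (1/2) * ∫ p : (Fin n → ℝ) × (Fin n → ℝ),
    (u p.1 - u p.2) ^ 2 / ‖p.1 - p.2‖ ^ ((n : ℝ) + 2 * s)

/-- The bilinear Gagliardo pairing `⟨u,v⟩_s`. -/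
noncomputable def fracPairing (n : ℕ) (s : ℝ) (u v : (Fin n → ℝ) → ℝ) : ℝ :=
  (1/2) * ∫ p : (Fin n → ℝ) × (Fin n → ℝ),
    (u p.1 - u p.2) * (v p.1 - v p.2) / ‖p.1 - p.2‖ ^ ((n : ℝ) + 2 * s)

/-- Finiteness of the Gagliardo seminorm. -/
def GagliardoFinite (n : ℕ) (s : ℝ) (u : (Fin n → ℝ) → ℝ) : Prop :=
  Integrable (fun p : (Fin n → ℝ) × (Fin n → ℝ) =>
    (u p.1 - u p.2) ^ 2 / ‖p.1 - p.2‖ ^ ((n : ℝ) + 2 * s))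

/-- Membership in `H^s(ℝ^n)`. -/
def MemHs (n : ℕ) (s : ℝ) (u : (Fin n → ℝ) → ℝ) : Prop :=
  MemLp u 2 (volume : Measure (Fin n → ℝ)) ∧ GagliardoFinite n s u

/-- Membership in `H^s_0(D)`. -/
def MemHs0 (n : ℕ) (s : ℝ) (D : Set (Fin n → ℝ)) (u : (Fin n → ℝ) → ℝ) : Prop :=
  MemHs n s u ∧ ∀ᵐ x : Fin n → ℝ, x ∉ D → u x = 0

/-- `u` is the weak solution of `(-Δ)^s u = f` in `D`, `u = 0` in `Dᶜ`. -/
def IsWeakSol (n : ℕ) (s : ℝ) (D : Set (Fin n → ℝ))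
    (f u : (Fin n → ℝ) → ℝ) : Prop :=
  MemHs0 n s D u ∧ ∀ v : (Fin n → ℝ) → ℝ, MemHs0 n s D v →
    fracPairing n s u v = ∫ x in D, f x * v x

/-- The weak closure `R̄_β` of the rearrangement class. -/
def Rbar (n : ℕ) (D : Set (Fin n → ℝ)) (β : ℝ) : Set ((Fin n → ℝ) → ℝ) :=
  {f | (∀ᵐ x : Fin n → ℝ, x ∈ D → 0 ≤ f x ∧ f x ≤ 1) ∧ ∫ x in D, f x = β}

section Gagliardo

variable {n : ℕ} {s : ℝ}

lemma MeasureTheory.AEStronglyMeasurable.sub_comp_fst_snd {X E : Type*} [MeasurableSpace X]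
    [NormedAddCommGroup E] {μ : Measure X} [SFinite μ] {u : X → E}
    (hu : AEStronglyMeasurable u μ) :
    AEStronglyMeasurable (fun p : X × X => u p.1 - u p.2) (μ.prod μ) :=
  (hu.comp_quasiMeasurePreserving Measure.quasiMeasurePreserving_fst).sub
    (hu.comp_quasiMeasurePreserving Measure.quasiMeasurePreserving_snd)

lemma abs_mul_div_le_add_sq_div (a b : ℝ) {d : ℝ} (hd : 0 ≤ d) :
    |a * b / d| ≤ (a ^ 2 / d + b ^ 2 / d) / 2 := by
  have hab : |a| * |b| ≤ (a ^ 2 + b ^ 2) / 2 := by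
    nlinarith [sq_nonneg (|a| - |b|), sq_abs a, sq_abs b]
  rw [abs_div, abs_of_nonneg hd, abs_mul, ← add_div, div_right_comm]
  exact div_le_div_of_nonneg_right hab hd

lemma GagliardoFinite.integrable_mul {u v : (Fin n → ℝ) → ℝ} (hGu : GagliardoFinite n s u)
    (hu : AEStronglyMeasurable u volume) (hv : AEStronglyMeasurable v volume)
    (hGv : GagliardoFinite n s v) :
    Integrable (fun p : (Fin n → ℝ) × (Fin n → ℝ) =>
      (u p.1 - u p.2) * (v p.1 - v p.2) / ‖p.1 - p.2‖ ^ ((n : ℝ) + 2 * s)) := by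
  have hkernel : Measurable (fun p : (Fin n → ℝ) × (Fin n → ℝ) =>
      ‖p.1 - p.2‖ ^ ((n : ℝ) + 2 * s)) :=
    (measurable_fst.sub measurable_snd).norm.pow_const _
  refine Integrable.mono' ((hGu.add hGv).div_const 2) ?_ (Eventually.of_forall fun p =>
    abs_mul_div_le_add_sq_div _ _ (Real.rpow_nonneg (norm_nonneg _) _))
  rw [Measure.volume_eq_prod]
  exact (hu.sub_comp_fst_snd.mul hv.sub_comp_fst_snd).div₀ hkernel.aestronglyMeasurable

lemma fracPairing_comm (u v : (Fin n → ℝ) → ℝ) : fracPairing n s u v = fracPairing n s v u := by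
  simp only [fracPairing, mul_comm (u _ - u _)]

lemma fracPairing_sub_right {u v w : (Fin n → ℝ) → ℝ} (hu : AEStronglyMeasurable u volume)
    (hv : AEStronglyMeasurable v volume) (hw : AEStronglyMeasurable w volume)
    (hGu : GagliardoFinite n s u) (hGv : GagliardoFinite n s v) (hGw : GagliardoFinite n s w) :
    fracPairing n s u (v - w) = fracPairing n s u v - fracPairing n s u w := by
  rw [fracPairing, fracPairing, fracPairing, ← mul_sub,
    ← integral_sub (hGu.integrable_mul hu hv hGv) (hGu.integrable_mul hu hw hGw)]
  congr 2 with p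
  simp only [Pi.sub_apply]
  ring

lemma IsWeakSol.fracPairing_sub {D : Set (Fin n → ℝ)} {f g u w : (Fin n → ℝ) → ℝ}
    (hu : IsWeakSol n s D f u) (hw : IsWeakSol n s D g w) :
    fracPairing n s u (u - w) = (∫ x in D, f x * u x) - ∫ x in D, g x * u x := by
  have hum := hu.1.1.1.aestronglyMeasurable
  rw [fracPairing_sub_right hum hum hw.1.1.1.aestronglyMeasurable hu.1.1.2 hu.1.1.2 hw.1.1.2,
    hu.2 u hu.1, fracPairing_comm, hw.2 u hu.1]

end Gagliardo

lemma integral_mul_eq_of_ae_sub_mul_sub_eq_zero {X : Type*} [MeasurableSpace X] {μ : Measure X}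
    {f g u : X → ℝ} (c : ℝ) (hf : Integrable f μ) (hg : Integrable g μ)
    (hfu : Integrable (fun x => f x * u x) μ) (hgu : Integrable (fun x => g x * u x) μ)
    (hfg : ∫ x, f x ∂μ = ∫ x, g x ∂μ) (hzero : ∀ᵐ x ∂μ, (f x - g x) * (u x - c) = 0) :
    ∫ x, f x * u x ∂μ = ∫ x, g x * u x ∂μ := by
  have hpointwise : (fun x => f x * u x - g x * u x) =ᵐ[μ] fun x => c * (f x - g x) := by
    filter_upwards [hzero] with x hx
    linear_combination hx
  rw [← sub_eq_zero, ← integral_sub hfu hgu, integral_congr_ae hpointwise, integral_const_mul,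
    integral_sub hf hg, hfg, sub_self, mul_zero]

section Rbar

variable {n : ℕ} {D : Set (Fin n → ℝ)} {β : ℝ} {f : (Fin n → ℝ) → ℝ}

lemma Rbar.integrableOn (hf : f ∈ Rbar n D β) (hβ : β ≠ 0) : IntegrableOn f D := by
  by_contra h
  -- `Rbar` does not ask for measurability; integrability comes from the integral being nonzero.
  exact hβ (hf.2 ▸ integral_undef h)

lemma Rbar.integrableOn_mul (hD : MeasurableSet D) (hDb : Bornology.IsBounded D)
    (hf : f ∈ Rbar n D β) (hβ : β ≠ 0) {u : (Fin n → ℝ) → ℝ} (hu : MemLp u 2 volume) :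
    IntegrableOn (fun x => f x * u x) D := by
  have : IsFiniteMeasure (volume.restrict D) := isFiniteMeasure_restrict.2 hDb.measure_lt_top.ne
  have hbound : ∀ᵐ x ∂volume.restrict D, ‖f x‖ ≤ 1 := by
    filter_upwards [ae_restrict_of_ae hf.1, ae_restrict_mem hD] with x hx hxD
    exact abs_le.2 ⟨by linarith [(hx hxD).1], (hx hxD).2⟩
  exact Integrable.bdd_mul (memLp_one_iff_integrable.1 ((hu.restrict D).mono_exponent one_le_two))
    (Rbar.integrableOn hf hβ).1 hbound

lemma indicator_one_mem_Rbar {E : Set (Fin n → ℝ)} (hE : MeasurableSet E) (hED : E ⊆ D)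
    (hEβ : volume E = ENNReal.ofReal β) (hβ : 0 ≤ β) :
    E.indicator (fun _ => (1 : ℝ)) ∈ Rbar n D β := by
  refine ⟨Eventually.of_forall fun x _ => ?_, ?_⟩
  · by_cases hx : x ∈ E <;> simp [hx]
  · rw [integral_indicator hE, Measure.restrict_restrict hE, inter_eq_left.2 hED,
      setIntegral_const, smul_eq_mul, mul_one, measureReal_def, hEβ, ENNReal.toReal_ofReal hβ]

end Rbar

lemma ae_sub_indicator_mul_sub_eq_zero {X : Type*} [MeasurableSpace X] {μ : Measure X}
    {D E : Set X} {f u : X → ℝ} {α : ℝ} (hD : MeasurableSet D)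
    (hsandwich : ∀ᵐ x ∂μ.restrict D, (α < u x → f x = 1) ∧ (u x < α → f x = 0))
    (hsub1 : {x ∈ D | α < u x} ⊆ E) (hsub2 : E ⊆ {x ∈ D | α ≤ u x}) :
    ∀ᵐ x ∂μ.restrict D, (f x - E.indicator (fun _ => (1 : ℝ)) x) * (u x - α) = 0 := by
  filter_upwards [hsandwich, ae_restrict_mem hD] with x hx hxD
  rcases lt_trichotomy (u x) α with hlt | heq | hgt
  · have hxE : x ∉ E := fun hxE => (hsub2 hxE).2.not_gt hlt
    simp [hx.2 hlt, hxE]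
  · simp [heq]
  · simp [hx.1 hgt, hsub1 ⟨hxD, hgt⟩]

theorem pairing_vanishes_general (n : ℕ) (s : ℝ)
    (D : Set (Fin n → ℝ)) (hD : IsOpen D) (hDb : Bornology.IsBounded D)
    (β : ℝ) (hβ : 0 < β)
    (fhat uhat : (Fin n → ℝ) → ℝ) (hfhat : fhat ∈ Rbar n D β)
    (hsol : IsWeakSol n s D fhat uhat)
    (α : ℝ)
    (hsandwich : ∀ᵐ x ∂(volume.restrict D),
      (α < uhat x → fhat x = 1) ∧ (uhat x < α → fhat x = 0))
    (Etil : Set (Fin n → ℝ)) (hEtil : MeasurableSet Etil)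
    (hsub1 : {x ∈ D | α < uhat x} ⊆ Etil) (hsub2 : Etil ⊆ {x ∈ D | α ≤ uhat x})
    (hEβ : volume Etil = ENNReal.ofReal β)
    (v : (Fin n → ℝ) → ℝ)
    (hv : IsWeakSol n s D (Etil.indicator (fun _ => (1:ℝ))) v) :
    fracPairing n s uhat (uhat - v) = 0 := by
  have hχ : Etil.indicator (fun _ => (1 : ℝ)) ∈ Rbar n D β :=
    indicator_one_mem_Rbar hEtil (fun x hx => (hsub2 hx).1) hEβ hβ.le
  have huL2 : MemLp uhat 2 volume := hsol.1.1.1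
  rw [hsol.fracPairing_sub hv, sub_eq_zero]
  exact integral_mul_eq_of_ae_sub_mul_sub_eq_zero α (Rbar.integrableOn hfhat hβ.ne')
    (Rbar.integrableOn hχ hβ.ne') (Rbar.integrableOn_mul hD.measurableSet hDb hfhat hβ.ne' huL2)
    (Rbar.integrableOn_mul hD.measurableSet hDb hχ hβ.ne' huL2) (hfhat.2.trans hχ.2.symm)
    (ae_sub_indicator_mul_sub_eq_zero hD.measurableSet hsandwich hsub1 hsub2)

/-- for a maximizer `f̂` with `χ_{û>α} ≤ f̂ ≤ χ_{û≥α}` a.e., and any set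
`Ẽ` with `{û>α} ⊆ Ẽ ⊆ {û≥α}` in `D`, `|Ẽ| = β`, and `v = u_{χ_Ẽ}`, the pairing
`⟨û, û − v⟩_s` vanishes. -/
theorem pairing_vanishes (n : ℕ) (s : ℝ) (hs0 : 0 < s) (hs1 : s < 1)
    (D : Set (Fin n → ℝ)) (hD : IsOpen D) (hDb : Bornology.IsBounded D)
    (β : ℝ) (hβ : 0 < β) (hβD : ENNReal.ofReal β < volume D)
    (fhat uhat : (Fin n → ℝ) → ℝ) (hfhat : fhat ∈ Rbar n D β)
    (hsol : IsWeakSol n s D fhat uhat)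
    (hmax : ∀ f u, f ∈ Rbar n D β → IsWeakSol n s D f u →
      gagliardoSq n s u ≤ gagliardoSq n s uhat)
    (α : ℝ) (hα : 0 < α)
    (hsandwich : ∀ᵐ x ∂(volume.restrict D),
      (α < uhat x → fhat x = 1) ∧ (uhat x < α → fhat x = 0))
    (Etil : Set (Fin n → ℝ)) (hEtil : MeasurableSet Etil)
    (hsub1 : {x ∈ D | α < uhat x} ⊆ Etil) (hsub2 : Etil ⊆ {x ∈ D | α ≤ uhat x})
    (hEβ : volume Etil = ENNReal.ofReal β)
    (v : (Fin n → ℝ) → ℝ)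
    (hv : IsWeakSol n s D (Etil.indicator (fun _ => (1:ℝ))) v) :
    fracPairing n s uhat (uhat - v) = 0 :=
  pairing_vanishes_general n s D hD hDb β hβ fhat uhat hfhat hsol α hsandwich Etil hEtil hsub1 hsub2
    hEβ v hv
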